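/- Let u and v be vertices of a series-parallel dag such that the fork-path of u is a prefix of the fork-path of v. Then u ≼ v (there is a directed path from u to v) if and only if d(u) ≤ d(v). -/

import Mathlib

/-- Series-parallel dag shapes: a single vertex, serial composition
(identifying the sink of `g1` with the source of `g2`), or parallel
composition (fresh source with edges to the sources of `g1`, `g2`, and a
fresh sink with edges from their sinks). -/
inductive SP : Type where
  | vert : SP
  | seq : SP → SP → SP
  | par : SP → SP → SP

/-- Non-source vertices of a series-parallel dag. -/
def NV : SP → Type
  | .vert => Empty
  | .seq g1 g2 => NV g1 ⊕ NV g2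
  | .par g1 g2 => ((Unit ⊕ NV g1) ⊕ (Unit ⊕ NV g2)) ⊕ Unit

/-- Vertices: the source, or a non-source vertex. -/
abbrev V (g : SP) : Type := Unit ⊕ NV g

/-- The (unique) source of a series-parallel dag. -/
def src (g : SP) : V g := Sum.inl ()

/-- Embedding of the first component of a serial composition. -/
def emb1 (g1 g2 : SP) : V g1 → V (.seq g1 g2)
  | .inl _ => Sum.inl ()
  | .inr n => Sum.inr (Sum.inl n)

/-- The (unique) sink of a series-parallel dag. -/
def snk : (g : SP) → V g
  | .vert => Sum.inl ()
  | .seq g1 g2 =>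
    match snk g2 with
    | .inl _ => emb1 g1 g2 (snk g1)
    | .inr n => Sum.inr (Sum.inr n)
  | .par _ _ => Sum.inr (Sum.inr ())

/-- Embedding of the second component of a serial composition:
the source of `g2` is identified with the sink of `g1`. -/
def emb2 (g1 g2 : SP) : V g2 → V (.seq g1 g2)
  | .inl _ => emb1 g1 g2 (snk g1)
  | .inr n => Sum.inr (Sum.inr n)

/-- Embedding of the left branch of a parallel composition. -/
def embL (g1 g2 : SP) (v : V g1) : V (.par g1 g2) := Sum.inr (Sum.inl (Sum.inl v))

/-- Embedding of the right branch of a parallel composition. -/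
def embR (g1 g2 : SP) (v : V g2) : V (.par g1 g2) := Sum.inr (Sum.inl (Sum.inr v))

/-- Edges of a series-parallel dag. -/
def Edge : (g : SP) → V g → V g → Prop
  | .vert, _, _ => False
  | .seq g1 g2, u, v =>
      (∃ a b, Edge g1 a b ∧ u = emb1 g1 g2 a ∧ v = emb1 g1 g2 b) ∨
      (∃ a b, Edge g2 a b ∧ u = emb2 g1 g2 a ∧ v = emb2 g1 g2 b)
  | .par g1 g2, u, v =>
      (∃ a b, Edge g1 a b ∧ u = embL g1 g2 a ∧ v = embL g1 g2 b) ∨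
      (∃ a b, Edge g2 a b ∧ u = embR g1 g2 a ∧ v = embR g1 g2 b) ∨
      (u = src (.par g1 g2) ∧ v = embL g1 g2 (src g1)) ∨
      (u = src (.par g1 g2) ∧ v = embR g1 g2 (src g2)) ∨
      (u = embL g1 g2 (snk g1) ∧ v = snk (.par g1 g2)) ∨
      (u = embR g1 g2 (snk g2) ∧ v = snk (.par g1 g2))

/-- `Reach g u v` (`u ≼ v`): there is a directed path (possibly empty) from `u` to `v`. -/
def Reach (g : SP) : V g → V g → Prop := Relation.ReflTransGen (Edge g)

/-- The dag-depth of a vertex (the length of a longest path ending at it),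
computed by the DePa rules: the source has depth 0; at a fork both children
have depth one greater; at a join the new vertex has depth
`1 + max` of the depths of the joining vertices. -/
def depth : (g : SP) → V g → ℕ
  | .vert, _ => 0
  | .seq _ _, .inl _ => 0
  | .seq g1 _, .inr (.inl n) => depth g1 (Sum.inr n)
  | .seq g1 g2, .inr (.inr n) => depth g1 (snk g1) + depth g2 (Sum.inr n)
  | .par _ _, .inl _ => 0
  | .par g1 _, .inr (.inl (.inl v)) => 1 + depth g1 v
  | .par _ g2, .inr (.inl (.inr v)) => 1 + depth g2 v
  | .par g1 g2, .inr (.inr _) => 1 + max (1 + depth g1 (snk g1)) (1 + depth g2 (snk g2))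

/-- The fork-path of a vertex, as a list of bits (`false` = L, `true` = R),
outermost fork first: the root has the empty path, a fork extends the path by
L and R for the two branches, and a join restores the common prefix. -/
def fpath : (g : SP) → V g → List Bool
  | .vert, _ => []
  | .seq _ _, .inl _ => []
  | .seq g1 _, .inr (.inl n) => fpath g1 (Sum.inr n)
  | .seq _ g2, .inr (.inr n) => fpath g2 (Sum.inr n)
  | .par _ _, .inl _ => []
  | .par g1 _, .inr (.inl (.inl v)) => false :: fpath g1 v
  | .par _ g2, .inr (.inl (.inr v)) => true :: fpath g2 v
  | .par _ _, .inr (.inr _) => []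

/-- Longest common prefix of two lists. -/
def lcp : List Bool → List Bool → List Bool
  | a :: as, b :: bs => if a = b then a :: lcp as bs else []
  | _, _ => []

/-!
Necessity holds because depth strictly increases along every edge. Sufficiency is by
induction on the dag. In a serial composition every vertex of the first part reaches every
vertex of the second through the shared sink/source, while a non-source vertex of the second
part is deeper than every vertex of the first. In a parallel composition the prefix condition
keeps `u` and `v` in the same branch unless one of them is the fresh source or sink; the source
reaches everything, everything reaches the sink, and the sink is strictly deeper than every
other vertex.
-/

variable {g g1 g2 : SP}

@[simp] theorem depth_src (g : SP) : depth g (src g) = 0 := by cases g <;> rfl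

@[simp] theorem fpath_src (g : SP) : fpath g (src g) = [] := by cases g <;> rfl

theorem snk_seq : snk (.seq g1 g2) = emb2 g1 g2 (snk g2) := by
  show (match snk g2 with
    | .inl _ => emb1 g1 g2 (snk g1)
    | .inr n => Sum.inr (Sum.inr n)) = _
  cases snk g2 <;> rfl

@[simp] theorem depth_emb1 (w : V g1) : depth (.seq g1 g2) (emb1 g1 g2 w) = depth g1 w := by
  rcases w with ⟨⟩ | n
  · exact (depth_src g1).symm
  · rfl

@[simp] theorem depth_emb2 (w : V g2) :
    depth (.seq g1 g2) (emb2 g1 g2 w) = depth g1 (snk g1) + depth g2 w := by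
  rcases w with ⟨⟩ | n
  · change depth _ (emb1 g1 g2 (snk g1)) = _ + depth g2 (src g2)
    rw [depth_emb1, depth_src, Nat.add_zero]
  · rfl

@[simp] theorem fpath_emb1 (w : V g1) : fpath (.seq g1 g2) (emb1 g1 g2 w) = fpath g1 w := by
  rcases w with ⟨⟩ | n
  · exact (fpath_src g1).symm
  · rfl

@[simp] theorem fpath_snk (g : SP) : fpath g (snk g) = [] := by
  induction g with
  | vert => rfl
  | seq g1 g2 ih1 ih2 =>
    rw [snk_seq]
    rcases h : snk g2 with ⟨⟩ | n
    · exact (fpath_emb1 (snk g1)).trans ih1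
    · exact (congrArg (fpath g2) h).symm.trans ih2
  | par => rfl

@[simp] theorem fpath_emb2 (w : V g2) : fpath (.seq g1 g2) (emb2 g1 g2 w) = fpath g2 w := by
  rcases w with ⟨⟩ | n
  · change fpath _ (emb1 g1 g2 (snk g1)) = fpath g2 (src g2)
    rw [fpath_emb1, fpath_snk, fpath_src]
  · rfl

@[simp] theorem depth_embL (w : V g1) : depth (.par g1 g2) (embL g1 g2 w) = 1 + depth g1 w := rfl

@[simp] theorem depth_embR (w : V g2) : depth (.par g1 g2) (embR g1 g2 w) = 1 + depth g2 w := rfl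

@[simp] theorem depth_snk_par :
    depth (.par g1 g2) (snk _) = 1 + max (1 + depth g1 (snk g1)) (1 + depth g2 (snk g2)) := rfl

@[simp] theorem fpath_embL (w : V g1) :
    fpath (.par g1 g2) (embL g1 g2 w) = false :: fpath g1 w := rfl

@[simp] theorem fpath_embR (w : V g2) :
    fpath (.par g1 g2) (embR g1 g2 w) = true :: fpath g2 w := rfl

theorem seq_cases (w : V (.seq g1 g2)) :
    (∃ a, w = emb1 g1 g2 a) ∨ ∃ n, w = emb2 g1 g2 (Sum.inr n) := by
  rcases w with ⟨⟩ | n | n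
  exacts [.inl ⟨src g1, rfl⟩, .inl ⟨Sum.inr n, rfl⟩, .inr ⟨n, rfl⟩]

theorem par_cases (w : V (.par g1 g2)) :
    w = src _ ∨ (∃ a, w = embL g1 g2 a) ∨ (∃ b, w = embR g1 g2 b) ∨ w = snk _ := by
  rcases w with ⟨⟩ | (a | b) | ⟨⟩
  exacts [.inl rfl, .inr (.inl ⟨a, rfl⟩), .inr (.inr (.inl ⟨b, rfl⟩)), .inr (.inr (.inr rfl))]

theorem Edge.depth_lt {u v : V g} (h : Edge g u v) : depth g u < depth g v := by
  induction g with
  | vert => exact h.elim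
  | seq g1 g2 ih1 ih2 =>
    rcases h with ⟨a, b, e, rfl, rfl⟩ | ⟨a, b, e, rfl, rfl⟩
    · simpa using ih1 e
    · simpa using ih2 e
  | par g1 g2 ih1 ih2 =>
    rcases h with ⟨a, b, e, rfl, rfl⟩ | ⟨a, b, e, rfl, rfl⟩ | ⟨rfl, rfl⟩ | ⟨rfl, rfl⟩ |
      ⟨rfl, rfl⟩ | ⟨rfl, rfl⟩
    · simpa using ih1 e
    · simpa using ih2 e
    all_goals simp only [depth_src, depth_embL, depth_embR, depth_snk_par]; omega

theorem Reach.depth_le {u v : V g} (h : Reach g u v) : depth g u ≤ depth g v := by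
  induction h with
  | refl => exact le_rfl
  | tail _ e ih => exact ih.trans e.depth_lt.le

theorem Edge.seq_left {a b : V g1} (h : Edge g1 a b) :
    Edge (.seq g1 g2) (emb1 g1 g2 a) (emb1 g1 g2 b) := .inl ⟨a, b, h, rfl, rfl⟩

theorem Edge.seq_right {a b : V g2} (h : Edge g2 a b) :
    Edge (.seq g1 g2) (emb2 g1 g2 a) (emb2 g1 g2 b) := .inr ⟨a, b, h, rfl, rfl⟩

theorem Edge.par_left {a b : V g1} (h : Edge g1 a b) :
    Edge (.par g1 g2) (embL g1 g2 a) (embL g1 g2 b) := .inl ⟨a, b, h, rfl, rfl⟩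

theorem Edge.par_right {a b : V g2} (h : Edge g2 a b) :
    Edge (.par g1 g2) (embR g1 g2 a) (embR g1 g2 b) := .inr (.inl ⟨a, b, h, rfl, rfl⟩)

theorem edge_src_embL : Edge (.par g1 g2) (src _) (embL g1 g2 (src g1)) :=
  .inr (.inr (.inl ⟨rfl, rfl⟩))

theorem edge_src_embR : Edge (.par g1 g2) (src _) (embR g1 g2 (src g2)) :=
  .inr (.inr (.inr (.inl ⟨rfl, rfl⟩)))

theorem edge_embL_snk : Edge (.par g1 g2) (embL g1 g2 (snk g1)) (snk _) :=
  .inr (.inr (.inr (.inr (.inl ⟨rfl, rfl⟩))))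

theorem edge_embR_snk : Edge (.par g1 g2) (embR g1 g2 (snk g2)) (snk _) :=
  .inr (.inr (.inr (.inr (.inr ⟨rfl, rfl⟩))))

theorem Reach.seq_left {a b : V g1} (h : Reach g1 a b) :
    Reach (.seq g1 g2) (emb1 g1 g2 a) (emb1 g1 g2 b) :=
  h.lift (emb1 g1 g2) fun _ _ => Edge.seq_left

theorem Reach.seq_right {a b : V g2} (h : Reach g2 a b) :
    Reach (.seq g1 g2) (emb2 g1 g2 a) (emb2 g1 g2 b) :=
  h.lift (emb2 g1 g2) fun _ _ => Edge.seq_right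

theorem Reach.par_left {a b : V g1} (h : Reach g1 a b) :
    Reach (.par g1 g2) (embL g1 g2 a) (embL g1 g2 b) :=
  h.lift (embL g1 g2) fun _ _ => Edge.par_left

theorem Reach.par_right {a b : V g2} (h : Reach g2 a b) :
    Reach (.par g1 g2) (embR g1 g2 a) (embR g1 g2 b) :=
  h.lift (embR g1 g2) fun _ _ => Edge.par_right

theorem Reach.seq_emb1_emb2 {a : V g1} {b : V g2} (ha : Reach g1 a (snk g1))
    (hb : Reach g2 (src g2) b) : Reach (.seq g1 g2) (emb1 g1 g2 a) (emb2 g1 g2 b) :=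
  ha.seq_left.trans hb.seq_right

theorem reach_snk (g : SP) (w : V g) : Reach g w (snk g) := by
  induction g with
  | vert => rcases w with ⟨⟩ | ⟨⟨⟩⟩; exact .refl
  | seq g1 g2 ih1 ih2 =>
    rw [snk_seq]
    rcases seq_cases w with ⟨a, rfl⟩ | ⟨n, rfl⟩
    · exact (ih1 a).seq_emb1_emb2 (ih2 _)
    · exact (ih2 _).seq_right
  | par g1 g2 ih1 ih2 =>
    have hL (a : V g1) : Reach (.par g1 g2) (embL g1 g2 a) (snk _) :=
      (ih1 a).par_left.tail edge_embL_snk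
    rcases par_cases w with rfl | ⟨a, rfl⟩ | ⟨b, rfl⟩ | rfl
    · exact .head edge_src_embL (hL (src g1))
    · exact hL a
    · exact (ih2 b).par_right.tail edge_embR_snk
    · exact .refl

theorem reach_src (g : SP) (w : V g) : Reach g (src g) w := by
  induction g with
  | vert => rcases w with ⟨⟩ | ⟨⟨⟩⟩; exact .refl
  | seq g1 g2 ih1 ih2 =>
    rcases seq_cases w with ⟨a, rfl⟩ | ⟨n, rfl⟩
    · exact (ih1 a).seq_left
    · exact (reach_snk g1 (src g1)).seq_emb1_emb2 (ih2 _)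
  | par g1 g2 ih1 ih2 =>
    rcases par_cases w with rfl | ⟨a, rfl⟩ | ⟨b, rfl⟩ | rfl
    · exact .refl
    · exact .head edge_src_embL (ih1 a).par_left
    · exact .head edge_src_embR (ih2 b).par_right
    · exact reach_snk _ _

theorem depth_le_depth_snk (w : V g) : depth g w ≤ depth g (snk g) := (reach_snk g w).depth_le

theorem depth_pos (n : NV g) : 0 < depth g (Sum.inr n) := by
  rcases (reach_src g (Sum.inr n)).cases_tail with h | ⟨w, hw, e⟩
  · exact absurd h Sum.inr_ne_inl
  · exact (depth_src g ▸ Reach.depth_le hw).trans_lt e.depth_lt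

theorem eq_src_of_depth_eq_zero {w : V g} (h : depth g w = 0) : w = src g := by
  rcases w with ⟨⟩ | n
  · rfl
  · exact absurd h (depth_pos n).ne'

def DepthDeterminesReach (g : SP) : Prop :=
  ∀ u v : V g, fpath g u <+: fpath g v → depth g u ≤ depth g v → Reach g u v

theorem depthDeterminesReach_vert : DepthDeterminesReach .vert := by
  rintro (⟨⟩ | ⟨⟨⟩⟩) (⟨⟩ | ⟨⟨⟩⟩) - -
  exact .refl

theorem DepthDeterminesReach.seq (h1 : DepthDeterminesReach g1) (h2 : DepthDeterminesReach g2) :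
    DepthDeterminesReach (.seq g1 g2) := by
  intro u v hp hd
  rcases seq_cases u with ⟨a, rfl⟩ | ⟨n, rfl⟩ <;> rcases seq_cases v with ⟨b, rfl⟩ | ⟨m, rfl⟩
  · simp only [fpath_emb1, depth_emb1] at hp hd
    exact (h1 a b hp hd).seq_left
  · exact (reach_snk g1 a).seq_emb1_emb2 (reach_src g2 _)
  · simp only [depth_emb1, depth_emb2] at hd
    have := depth_pos n
    have := depth_le_depth_snk b
    omega
  · simp only [fpath_emb2, depth_emb2, Nat.add_le_add_iff_left] at hp hd
    exact (h2 _ _ hp hd).seq_right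

theorem DepthDeterminesReach.par (h1 : DepthDeterminesReach g1) (h2 : DepthDeterminesReach g2) :
    DepthDeterminesReach (.par g1 g2) := by
  intro u v hp hd
  rcases par_cases v with rfl | ⟨b, rfl⟩ | ⟨b, rfl⟩ | rfl
  · rw [depth_src, Nat.le_zero] at hd
    rw [eq_src_of_depth_eq_zero hd]
    exact .refl
  · rcases par_cases u with rfl | ⟨a, rfl⟩ | ⟨a, rfl⟩ | rfl
    · exact reach_src _ _
    · simp only [fpath_embL, List.cons_prefix_cons, depth_embL, true_and,
        Nat.add_le_add_iff_left] at hp hd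
      exact (h1 a b hp hd).par_left
    · simp at hp
    · simp only [depth_snk_par, depth_embL] at hd
      have := depth_le_depth_snk b
      omega
  · rcases par_cases u with rfl | ⟨a, rfl⟩ | ⟨a, rfl⟩ | rfl
    · exact reach_src _ _
    · simp at hp
    · simp only [fpath_embR, List.cons_prefix_cons, depth_embR, true_and,
        Nat.add_le_add_iff_left] at hp hd
      exact (h2 a b hp hd).par_right
    · simp only [depth_snk_par, depth_embR] at hd
      have := depth_le_depth_snk b
      omega
  · exact reach_snk _ _

theorem depthDeterminesReach : ∀ g, DepthDeterminesReach g
  | .vert => depthDeterminesReach_vert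
  | .seq g1 g2 => (depthDeterminesReach g1).seq (depthDeterminesReach g2)
  | .par g1 g2 => (depthDeterminesReach g1).par (depthDeterminesReach g2)

/-- if the fork-path of `u` is a prefix of the fork-path of `v`,
then `u ≼ v` iff `d(u) ≤ d(v)`. -/
theorem reach_iff_depth_le_of_prefix (g : SP) (u v : V g)
    (h : fpath g u <+: fpath g v) :
    Reach g u v ↔ depth g u ≤ depth g v :=
  ⟨Reach.depth_le, depthDeterminesReach g u v h⟩
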